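/- Define the k-stuttering of a word w = σ_0...σ_{t−1} as σ_0^k σ_1^k ... σ_{t−1}^k. For regular languages L_0, ..., L_{k−1}, the set of k-stutterings of words in ⋂_i L_i equals (⧢_{i∈[k]} L_i) ∩ (⋃_{a∈Σ} {a^k})^*, where ⧢ denotes interleaving. -/

import Mathlib

/-- The `(i mod k)`-restriction of a word: letters at positions ≡ i (mod k). -/
def restrict {α : Type*} (k i : ℕ) (w : List α) : List α :=
  (((List.range w.length).zip w).filter fun p => p.1 % k = i).map Prod.snd

/-- The interleaving of `k` languages: words of length divisible by `k` whose
`(i mod k)`-restriction belongs to `L i` for every `i ∈ [k]`. -/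
def interleaving {α : Type*} (k : ℕ) (L : Fin k → Language α) : Set (List α) :=
  {w | w.length % k = 0 ∧ ∀ i : Fin k, restrict k i w ∈ L i}

/-- Kleene star of a set of words. -/
def star {α : Type*} (S : Set (List α)) : Set (List α) :=
  {w | ∃ l : List (List α), (∀ u ∈ l, u ∈ S) ∧ l.flatten = w}

/-- The `k`-stuttering of a word `σ₀…σ_{t-1}` is `σ₀^k σ₁^k … σ_{t-1}^k`. -/
def stutter {α : Type*} (k : ℕ) (w : List α) : List α :=
  (w.map (List.replicate k)).flatten

/-!
The `k`-stuttering of `u` consists of blocks `a^k`, one per letter of `u`, and each block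
contributes exactly its single letter to every `(i mod k)`-restriction; hence every restriction
of `stutter k u` is `u` itself. Conversely, the words in `(⋃ₐ {a^k})^*` are exactly the
`k`-stutterings, and such a word is determined by any one of its restrictions.
-/

/-- The `(i mod k)`-restriction of a word whose first letter sits at position `n`. -/
def restrictFrom {α : Type*} (k i n : ℕ) (w : List α) : List α :=
  (((List.range' n w.length).zip w).filter fun p => p.1 % k = i).map Prod.snd

section restrictFrom

variable {α : Type*} (k i : ℕ)

lemma restrict_eq_restrictFrom_zero (w : List α) : restrict k i w = restrictFrom k i 0 w := by
  simp only [restrict, restrictFrom, List.range_eq_range']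

lemma restrictFrom_cons (n : ℕ) (a : α) (w : List α) :
    restrictFrom k i n (a :: w) = (if n % k = i then [a] else []) ++ restrictFrom k i (n + 1) w := by
  simp only [restrictFrom, List.length_cons, List.range'_succ, List.zip_cons_cons,
    List.filter_cons]
  split <;> simp_all

lemma restrictFrom_append (n : ℕ) (v w : List α) :
    restrictFrom k i n (v ++ w) = restrictFrom k i n v ++ restrictFrom k i (n + v.length) w := by
  simp only [restrictFrom, List.length_append]
  rw [← List.range'_append_1, List.zip_append (by simp)]
  simp [List.filter_append]

lemma restrictFrom_congr_mod (w : List α) {n m : ℕ} (h : n % k = m % k) :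
    restrictFrom k i n w = restrictFrom k i m w := by
  induction w generalizing n m with
  | nil => rfl
  | cons a w ih =>
    rw [restrictFrom_cons, restrictFrom_cons, h, ih (Nat.ModEq.add_right 1 h)]

lemma restrictFrom_replicate (a : α) (m : ℕ) {j : ℕ} (h : j + m ≤ k) :
    restrictFrom k i j (List.replicate m a) = if j ≤ i ∧ i < j + m then [a] else [] := by
  induction m generalizing j with
  | zero => simp [restrictFrom]
  | succ m ih =>
    rw [List.replicate_succ, restrictFrom_cons, ih (by omega), Nat.mod_eq_of_lt (by omega)]
    split_ifs <;> simp_all <;> omega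

end restrictFrom

section stutter

variable {α : Type*} (k : ℕ)

lemma stutter_cons (a : α) (u : List α) :
    stutter k (a :: u) = List.replicate k a ++ stutter k u := by
  simp [stutter]

lemma length_stutter (u : List α) : (stutter k u).length = u.length * k := by
  induction u with
  | nil => simp [stutter]
  | cons a u ih =>
    rw [stutter_cons, List.length_append, List.length_replicate, ih, List.length_cons]
    ring

lemma length_stutter_mod (u : List α) : (stutter k u).length % k = 0 := by
  rw [length_stutter, Nat.mul_mod_left]

lemma restrict_stutter {i : ℕ} (hi : i < k) (u : List α) : restrict k i (stutter k u) = u := by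
  rw [restrict_eq_restrictFrom_zero]
  induction u with
  | nil => rfl
  | cons a u ih =>
    have hblock : (List.replicate k a).length % k = 0 % k := by simp
    rw [stutter_cons, restrictFrom_append, restrictFrom_replicate k i a k (by omega),
      if_pos ⟨i.zero_le, by omega⟩, zero_add, restrictFrom_congr_mod k i _ hblock, ih]
    rfl

lemma range_stutter : Set.range (stutter k) = star {v : List α | ∃ a, v = List.replicate k a} := by
  ext w
  constructor
  · rintro ⟨u, rfl⟩
    refine ⟨u.map (List.replicate k), ?_, rfl⟩
    simp
  · rintro ⟨l, hl, rfl⟩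
    induction l with
    | nil => exact ⟨[], rfl⟩
    | cons v l ih =>
      obtain ⟨a, rfl⟩ := hl v List.mem_cons_self
      obtain ⟨u, hu⟩ := ih fun v hv => hl v (List.mem_cons_of_mem _ hv)
      exact ⟨a :: u, by rw [stutter_cons, hu, List.flatten_cons]⟩

end stutter

theorem stutter_image_inter_general {α : Type*} (k : ℕ)
    (L : Fin k → Language α) :
    (stutter k) '' (⋂ i : Fin k, (L i : Set (List α))) =
      interleaving k L ∩ star {v | ∃ a : α, v = List.replicate k a} := by
  rw [← range_stutter]
  ext w
  constructor
  · rintro ⟨u, hu, rfl⟩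
    refine ⟨⟨length_stutter_mod k u, fun i => ?_⟩, u, rfl⟩
    rw [restrict_stutter k i.2]
    exact Set.mem_iInter.1 hu i
  · rintro ⟨⟨-, hmem⟩, u, rfl⟩
    refine ⟨u, Set.mem_iInter.2 fun i => ?_, rfl⟩
    rw [← restrict_stutter k i.2 u]
    exact hmem i

/-- For regular languages `L₀, …, L_{k-1}`, the set of `k`-stutterings of words
in `⋂ᵢ Lᵢ` equals `(⧢_{i∈[k]} Lᵢ) ∩ (⋃_{a∈Σ} {a^k})^*`. -/
theorem stutter_image_inter {α : Type*} (k : ℕ) (hk : 0 < k)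
    (L : Fin k → Language α) (hreg : ∀ i, (L i).IsRegular) :
    (stutter k) '' (⋂ i : Fin k, (L i : Set (List α))) =
      interleaving k L ∩ star {v | ∃ a : α, v = List.replicate k a} :=
  stutter_image_inter_general k L
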